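/- Optimization-free lower bound: with h even, nonnegative on [−1,1], of degree 2s, Gegenbauer coefficients λ_0 = 1 and λ_{2j} ≠ 0 for j ≤ k, and (X,W) a cubature rule of degree 2(k+s), define F = Γ̂_h^{-1}(f) and β* = min_{z∈X} F(z). Then β* ≤ min_{x∈S} f(x) for every f ∈ R_{2k}. -/

import Mathlib

open MeasureTheory MvPolynomial

/-- The Laplacian operator on polynomials in `n` variables. -/
noncomputable def laplacian (n : ℕ) : MvPolynomial (Fin n) ℝ →ₗ[ℝ] MvPolynomial (Fin n) ℝ :=
  ∑ i : Fin n,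
    LinearMap.comp (MvPolynomial.pderiv i).toLinearMap (MvPolynomial.pderiv i).toLinearMap

/-- The space `H_j` of homogeneous harmonic polynomials of degree `j` in `n` variables. -/
noncomputable def harmonicSubmodule (n j : ℕ) : Submodule ℝ (MvPolynomial (Fin n) ℝ) :=
  MvPolynomial.homogeneousSubmodule (Fin n) ℝ j ⊓ LinearMap.ker (laplacian n)

/-- `dim H_j`. -/
noncomputable def dimHarm (n j : ℕ) : ℕ := Module.finrank ℝ (harmonicSubmodule n j)

/-- The `(n-1)`-dimensional surface (Hausdorff) measure on `ℝⁿ`. -/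
noncomputable def sphereMeasure (n : ℕ) : Measure (EuclideanSpace ℝ (Fin n)) := μH[(n:ℝ) - 1]

/-- The unit sphere `S ⊆ ℝⁿ`. -/
noncomputable def usphere (n : ℕ) : Set (EuclideanSpace ℝ (Fin n)) :=
  Metric.sphere (0 : EuclideanSpace ℝ (Fin n)) 1

/-- Evaluation of a polynomial at a point of `ℝⁿ`. -/
noncomputable def evp {n : ℕ} (x : EuclideanSpace ℝ (Fin n)) (p : MvPolynomial (Fin n) ℝ) : ℝ :=
  MvPolynomial.eval (fun i => x i) p

/-- Euclidean inner product `⟨x, y⟩`. -/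
noncomputable def ip {n : ℕ} (x y : EuclideanSpace ℝ (Fin n)) : ℝ := inner ℝ x y

/-- The polynomial `‖x‖² = x₁² + ⋯ + xₙ²`. -/
noncomputable def normsq (n : ℕ) : MvPolynomial (Fin n) ℝ := ∑ i : Fin n, (MvPolynomial.X i)^2

/-- The Gegenbauer polynomials `C_j^{(α)}`. -/
noncomputable def gegenbauer (a : ℝ) : ℕ → Polynomial ℝ
  | 0 => 1
  | 1 => Polynomial.C (2*a) * Polynomial.X
  | (j+2) => Polynomial.C ((2*((j:ℝ)+1+a))/((j:ℝ)+2)) * Polynomial.X * gegenbauer a (j+1)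
      - Polynomial.C (((j:ℝ)+2*a)/((j:ℝ)+2)) * gegenbauer a j

/-!
Put `G = Γ̂_h⁻¹ f` and `β = min_X G`. The form `G - β‖x‖^{2k}` is nonnegative on the nodes, so
its image under `Γ̂_h`, which is `f - β‖x‖^{2k}` because `Γ̂_h` fixes `‖x‖^{2k}` (`λ_0 = 1`), is
nonnegative on the sphere, where `‖x‖^{2k} = 1`.
-/

lemma normsq_mem_homogeneousSubmodule (n : ℕ) :
    normsq n ∈ homogeneousSubmodule (Fin n) ℝ 2 :=
  Submodule.sum_mem _ fun i _ => by simpa using (isHomogeneous_X ℝ i).pow 2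

lemma one_mem_harmonicSubmodule_zero (n : ℕ) :
    (1 : MvPolynomial (Fin n) ℝ) ∈ harmonicSubmodule n 0 :=
  Submodule.mem_inf.mpr ⟨isHomogeneous_one (Fin n) ℝ, by simp [laplacian, LinearMap.sum_apply]⟩

lemma normsq_pow_mul_mem_homogeneousSubmodule {n j k : ℕ} (hjk : j ≤ k) {q : MvPolynomial (Fin n) ℝ}
    (hq : q ∈ harmonicSubmodule n (2 * j)) :
    normsq n ^ (k - j) * q ∈ homogeneousSubmodule (Fin n) ℝ (2 * k) := by
  have h := ((normsq_mem_homogeneousSubmodule n).pow (k - j)).mul (Submodule.mem_inf.mp hq).1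
  rwa [show 2 * (k - j) + 2 * j = 2 * k by omega] at h

lemma evp_normsq_of_mem_usphere {n : ℕ} {x : EuclideanSpace ℝ (Fin n)} (hx : x ∈ usphere n) :
    evp x (normsq n) = 1 := by
  have hnorm : ‖x‖ = 1 := by simpa [usphere] using hx
  have hsum : ∑ i, x i ^ 2 = ‖x‖ ^ 2 := by
    rw [EuclideanSpace.norm_eq, Real.sq_sqrt (by positivity)]
    simp [Real.norm_eq_abs, sq_abs]
  simp [evp, normsq, hsum, hnorm]

lemma evp_normsq_pow_of_mem_usphere {n : ℕ} {x : EuclideanSpace ℝ (Fin n)} (hx : x ∈ usphere n)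
    (k : ℕ) :
    evp x (normsq n ^ k) = 1 := by
  rw [evp, map_pow, ← evp, evp_normsq_of_mem_usphere hx, one_pow]

lemma inf'_evp_le_evp_map {n d : ℕ} {X : Finset (EuclideanSpace ℝ (Fin n))} (hX : X.Nonempty)
    {S : Set (EuclideanSpace ℝ (Fin n))} (Γ : MvPolynomial (Fin n) ℝ →ₗ[ℝ] MvPolynomial (Fin n) ℝ)
    (hpos : ∀ p : MvPolynomial (Fin n) ℝ, p.IsHomogeneous d →
      (∀ z ∈ X, 0 ≤ evp z p) → ∀ x ∈ S, 0 ≤ evp x (Γ p))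
    {r G : MvPolynomial (Fin n) ℝ} (hr : r ∈ homogeneousSubmodule (Fin n) ℝ d)
    (hrX : ∀ z ∈ X, evp z r = 1) (hrS : ∀ x ∈ S, evp x r = 1) (hΓr : Γ r = r)
    (hG : G ∈ homogeneousSubmodule (Fin n) ℝ d) {x : EuclideanSpace ℝ (Fin n)} (hx : x ∈ S) :
    X.inf' hX (fun z => evp z G) ≤ evp x (Γ G) := by
  set β := X.inf' hX (fun z => evp z G)
  have hnodes : ∀ z ∈ X, 0 ≤ evp z (G - β • r) := fun z hz => by
    simp only [evp, map_sub, smul_eval] at hrX ⊢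
    rw [hrX z hz, mul_one, sub_nonneg]
    exact Finset.inf'_le _ hz
  have hsphere := hpos _ (Submodule.sub_mem _ hG (Submodule.smul_mem _ β hr)) hnodes x hx
  simp only [map_sub, map_smul, hΓr, evp, smul_eval] at hsphere hrS
  rwa [hrS x hx, mul_one, sub_nonneg] at hsphere

lemma map_sum_inv_smul_eq_sum {n k : ℕ} (lam : ℕ → ℝ) (hlam : ∀ j, j ≤ k → lam (2*j) ≠ 0)
    (Γop : MvPolynomial (Fin n) ℝ →ₗ[ℝ] MvPolynomial (Fin n) ℝ)
    (hdiag : ∀ j, j ≤ k → ∀ q ∈ harmonicSubmodule n (2*j),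
      Γop ((normsq n)^(k-j) * q) = lam (2*j) • ((normsq n)^(k-j) * q))
    (F : Fin (k+1) → MvPolynomial (Fin n) ℝ)
    (hF : ∀ j : Fin (k+1), F j ∈ harmonicSubmodule n (2*(j:ℕ))) :
    Γop (∑ j : Fin (k+1), (1/lam (2*(j:ℕ))) • ((normsq n)^(k-(j:ℕ)) * F j)) =
      ∑ j : Fin (k+1), (normsq n)^(k-(j:ℕ)) * F j := by
  rw [map_sum]
  refine Finset.sum_congr rfl fun j _ => ?_
  have hjk : (j : ℕ) ≤ k := Nat.lt_succ_iff.mp j.2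
  rw [map_smul, hdiag j hjk (F j) (hF j), smul_smul, one_div, inv_mul_cancel₀ (hlam j hjk),
    one_smul]

theorem optimization_free_lower_bound_general
    (n k : ℕ)
    (X : Finset (EuclideanSpace ℝ (Fin n))) (hXne : X.Nonempty)
    (hXs : ∀ x ∈ X, x ∈ usphere n)
    (lam : ℕ → ℝ) (hlam0 : lam 0 = 1) (hlam : ∀ j, j ≤ k → lam (2*j) ≠ 0)
    (Γop : MvPolynomial (Fin n) ℝ →ₗ[ℝ] MvPolynomial (Fin n) ℝ)
    (hdiag : ∀ j, j ≤ k → ∀ q ∈ harmonicSubmodule n (2*j),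
      Γop ((normsq n)^(k-j) * q) = lam (2*j) • ((normsq n)^(k-j) * q))
    (hpos : ∀ p : MvPolynomial (Fin n) ℝ, p.IsHomogeneous (2*k) →
      (∀ x ∈ X, 0 ≤ evp x p) → ∀ x ∈ usphere n, 0 ≤ evp x (Γop p))
    (F : Fin (k+1) → MvPolynomial (Fin n) ℝ)
    (hF : ∀ j : Fin (k+1), F j ∈ harmonicSubmodule n (2*(j:ℕ)))
    (f : MvPolynomial (Fin n) ℝ)
    (hf : f = ∑ j : Fin (k+1), (normsq n)^(k-(j:ℕ)) * F j) :
    ∀ x ∈ usphere n,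
      X.inf' hXne
          (fun z => evp z (∑ j : Fin (k+1), (1/lam (2*(j:ℕ))) • ((normsq n)^(k-(j:ℕ)) * F j)))
        ≤ evp x f := by
  intro x hx
  subst hf
  rw [← map_sum_inv_smul_eq_sum lam hlam Γop hdiag F hF]
  refine inf'_evp_le_evp_map hXne Γop hpos ((normsq_mem_homogeneousSubmodule n).pow k)
    (fun z hz => evp_normsq_pow_of_mem_usphere (hXs z hz) k)
    (fun y hy => evp_normsq_pow_of_mem_usphere hy k) ?_ ?_ hx
  · simpa [hlam0] using hdiag 0 k.zero_le 1 (one_mem_harmonicSubmodule_zero n)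
  · refine Submodule.sum_mem _ fun j _ => Submodule.smul_mem _ _ ?_
    exact normsq_pow_mul_mem_homogeneousSubmodule (Nat.lt_succ_iff.mp j.2) (hF j)

/-- optimization-free lower bound: `β* = min_{z∈X} (Γ̂_h⁻¹ f)(z)` is a
lower bound for `f` on the sphere, where `λ_0 = 1`, `λ_{2j} ≠ 0` for `j ≤ k`, `(X,W)` is
a cubature rule of degree `2(k+s)` and `Γ̂_h` acts diagonally with eigenvalues `λ_{2j}`
and maps node-nonnegative forms to sphere-nonnegative forms. -/
theorem optimization_free_lower_bound
    (n k s : ℕ) (hn : 1 ≤ n)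
    (X : Finset (EuclideanSpace ℝ (Fin n))) (hXne : X.Nonempty)
    (W : EuclideanSpace ℝ (Fin n) → ℝ)
    (hXs : ∀ x ∈ X, x ∈ usphere n) (hW : ∀ x ∈ X, 0 < W x)
    (hcub : ∀ p : MvPolynomial (Fin n) ℝ, p.IsHomogeneous (2*(k+s)) →
      (∫ y in usphere n, evp y p ∂(sphereMeasure n)) = ∑ x ∈ X, W x * evp x p)
    (lam : ℕ → ℝ) (hlam0 : lam 0 = 1) (hlam : ∀ j, j ≤ k → lam (2*j) ≠ 0)
    (Γop : MvPolynomial (Fin n) ℝ →ₗ[ℝ] MvPolynomial (Fin n) ℝ)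
    (hdiag : ∀ j, j ≤ k → ∀ q ∈ harmonicSubmodule n (2*j),
      Γop ((normsq n)^(k-j) * q) = lam (2*j) • ((normsq n)^(k-j) * q))
    (hpos : ∀ p : MvPolynomial (Fin n) ℝ, p.IsHomogeneous (2*k) →
      (∀ x ∈ X, 0 ≤ evp x p) → ∀ x ∈ usphere n, 0 ≤ evp x (Γop p))
    (F : Fin (k+1) → MvPolynomial (Fin n) ℝ)
    (hF : ∀ j : Fin (k+1), F j ∈ harmonicSubmodule n (2*(j:ℕ)))
    (f : MvPolynomial (Fin n) ℝ)
    (hf : f = ∑ j : Fin (k+1), (normsq n)^(k-(j:ℕ)) * F j) :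
    ∀ x ∈ usphere n,
      X.inf' hXne
          (fun z => evp z (∑ j : Fin (k+1), (1/lam (2*(j:ℕ))) • ((normsq n)^(k-(j:ℕ)) * F j)))
        ≤ evp x f :=
  optimization_free_lower_bound_general n k X hXne hXs lam hlam0 hlam Γop hdiag hpos F hF f hf
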